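/- Let B be a simplicial (d-1)-ball on vertex set {1,...,i-1} with d ≥ 2, and let T = B * i be the cone (join with new vertex i). Then the boundary sphere ∂T is k-neighborly if and only if ∂B is (k-1)-neighborly and B is k-neighborly. -/
import Mathlib


variable {α : Type*} [DecidableEq α]

/-- The cone (join) of a simplicial complex `K` with a new vertex `v`. -/
def coneOn (v : α) (K : Set (Finset α)) : Set (Finset α) :=
  {s | s ∈ K ∨ ∃ φ ∈ K, s = insert v φ}

/-- `K` is `k`-neighborly on the vertex set `S` if every `k`-subset of `S` is a
face of `K`. -/
def Neighborly (S : Finset α) (K : Set (Finset α)) (k : ℕ) : Prop :=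
  ∀ s : Finset α, s ⊆ S → s.card = k → s ∈ K

/-- Let `B` be a simplicial `(d-1)`-ball on the vertex set `S \ {v}` (`d ≥ 2`),
with boundary complex `Bd ⊆ B`, and let `T = B * v` be the cone over `B` with
apex `v`.  Its boundary satisfies `∂T = (Bd * v) ∪ B`.  Then `∂T` is
`k`-neighborly iff `Bd` is `(k-1)`-neighborly and `B` is `k`-neighborly. -/
theorem cone_neighborly_iff (d k : ℕ) (hd : 2 ≤ d) (hk : 1 ≤ k)
    (v : α) (S : Finset α) (hv : v ∈ S)
    (B Bd bdT : Set (Finset α))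
    (hBsub : ∀ φ ∈ B, φ ⊆ S.erase v)
    (hBcard : ∀ φ ∈ B, φ.card ≤ d)
    (hBd : Bd ⊆ B)
    (hbdT : bdT = coneOn v Bd ∪ B) :
    Neighborly S bdT k ↔
      Neighborly (S.erase v) Bd (k - 1) ∧ Neighborly (S.erase v) B k := by
  subst hbdT
  constructor
  · intro h
    constructor
    · intro s hs hcard
      have hvs : v ∉ s := fun hmem => (Finset.notMem_erase v S) (hs hmem)
      have hsub : insert v s ⊆ S := by
        intro x hx
        rcases Finset.mem_insert.mp hx with rfl | hx
        · exact hv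
        · exact Finset.mem_of_mem_erase (hs hx)
      have hcard' : (insert v s).card = k := by
        rw [Finset.card_insert_of_notMem hvs, hcard]
        omega
      have := h _ hsub hcard'
      rcases this with (hmem | ⟨φ, hφ, heq⟩) | hmem
      · exact absurd (hBsub _ (hBd hmem) (Finset.mem_insert_self v s))
          (Finset.notMem_erase v S)
      · have hvφ : v ∉ φ := fun hm => (Finset.notMem_erase v S) (hBsub _ (hBd hφ) hm)
        have : s = φ := by
          have := congrArg (Finset.erase · v) heq
          simpa [Finset.erase_insert hvs, Finset.erase_insert hvφ] using this
        exact this ▸ hφ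
      · exact absurd (hBsub _ hmem (Finset.mem_insert_self v s))
          (Finset.notMem_erase v S)
    · intro s hs hcard
      have hvs : v ∉ s := fun hmem => (Finset.notMem_erase v S) (hs hmem)
      have := h s (hs.trans (Finset.erase_subset v S)) hcard
      rcases this with (hmem | ⟨φ, hφ, heq⟩) | hmem
      · exact hBd hmem
      · exact absurd (heq ▸ Finset.mem_insert_self v φ) hvs
      · exact hmem
  · rintro ⟨h1, h2⟩ s hs hcard
    by_cases hvs : v ∈ s
    · left
      right
      refine ⟨s.erase v, h1 _ (fun x hx => Finset.mem_erase.mpr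
        ⟨(Finset.mem_erase.mp hx).1, hs (Finset.mem_erase.mp hx).2⟩) ?_, ?_⟩
      · rw [Finset.card_erase_of_mem hvs, hcard]
      · rw [Finset.insert_erase hvs]
    · right
      exact h2 s (fun x hx => Finset.mem_erase.mpr ⟨fun h => hvs (h ▸ hx), hs hx⟩) hcard
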